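/- arXiv:2601.23213 — 3 statements merged into one kernel-verified Lean document; each statement's English description precedes it below -/
import Mathlib

section
/- Let α ∈ [0,1]. For all joint probability distributions P and Q such that Q is obtained from P by a conditionally mixing channel, it holds that ∑_{y: P_Y(y)>0} P_Y(y)·H_α(P_{X|Y=y}) ≤ ∑_{y′: Q_{Y′}(y′)>0} Q_{Y′}(y′)·H_α(Q_{X′|Y′=y′}); that is, the quantity H_{0,α}(X|Y)_P = ∑_y P_Y(y)·H_α(P_{X|Y=y}) is monotone non-decreasing under conditionally mixing channels. -/
open MeasureTheory
open scoped ENNReal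

noncomputable section

/-- Base-2 logarithm. -/
def log2 (x : ℝ) : ℝ := Real.logb 2 x

/-- Base-2 exponential. -/
def exp2 (x : ℝ) : ℝ := (2 : ℝ) ^ x

/-- Rényi entropy of order `α ∈ [0,∞]` of a vector `p` on a finite set. -/
def renyi {X : Type*} [Fintype X] (α : ℝ≥0∞) (p : X → ℝ) : ℝ :=
  if α = 0 then log2 (Nat.card {x : X // 0 < p x})
  else if α = 1 then -∑ x, p x * log2 (p x)
  else if α = ⊤ then -log2 (⨆ x, p x)
  else (1 - α.toReal)⁻¹ * log2 (∑ x, p x ^ α.toReal)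

/-- A probability vector on a finite set. -/
def IsProbVec {X : Type*} [Fintype X] (p : X → ℝ) : Prop :=
  (∀ x, 0 ≤ p x) ∧ ∑ x, p x = 1

/-- A doubly stochastic matrix. -/
def DoublyStochastic {X : Type*} [Fintype X] (S : Matrix X X ℝ) : Prop :=
  (∀ i j, 0 ≤ S i j) ∧ (∀ i, ∑ j, S i j = 1) ∧ (∀ j, ∑ i, S i j = 1)

/-- `Q` is obtained from `P` by a conditionally mixing channel. -/
def CondMixed {X Y Y' : Type*} [Fintype X] [Fintype Y] [Fintype Y']
    (P : Matrix X Y ℝ) (Q : Matrix X Y' ℝ) : Prop :=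
  ∃ (k : ℕ) (S : Fin k → Matrix X X ℝ) (D : Fin k → Matrix Y Y' ℝ),
    (∀ i, DoublyStochastic (S i)) ∧
    (∀ i a b, 0 ≤ D i a b) ∧
    (∀ a, ∑ b, ∑ i, D i a b = 1) ∧
    Q = ∑ i, S i * P * D i

/-- A joint probability distribution on finite alphabets, viewed as a matrix. -/
def IsJointProb {X Y : Type*} [Fintype X] [Fintype Y] (P : Matrix X Y ℝ) : Prop :=
  (∀ x y, 0 ≤ P x y) ∧ ∑ x, ∑ y, P x y = 1

/-- Marginal on the conditioning system: the `y`-th column sum. -/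
def margY {X Y : Type*} [Fintype X] (P : Matrix X Y ℝ) (y : Y) : ℝ := ∑ x, P x y

/-- The conditioned distribution (normalized `y`-th column). -/
def condX {X Y : Type*} [Fintype X] (P : Matrix X Y ℝ) (y : Y) : X → ℝ :=
  fun x => P x y / margY P y

/-- The conditional entropy `H_{t,τ}`. -/
def Hbulk {X Y : Type*} [Fintype X] [Fintype Y] (t : ℝ) (τ : Measure ℝ≥0∞)
    (P : Matrix X Y ℝ) : ℝ :=
  t⁻¹ * log2 (∑ y ∈ Finset.univ.filter (fun y => 0 < margY P y),
    margY P y * exp2 (t * ∫ α, renyi α (condX P y) ∂τ))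

/-- The conditional entropy `H_{0,α}`. -/
def HzeroA {X Y : Type*} [Fintype X] [Fintype Y] (α : ℝ≥0∞) (P : Matrix X Y ℝ) : ℝ :=
  ∑ y ∈ Finset.univ.filter (fun y => 0 < margY P y), margY P y * renyi α (condX P y)

/-- The conditional entropy `H_{-∞,τ}`. -/
def HnegInf {X Y : Type*} [Fintype X] [Fintype Y] (τ : Measure ℝ≥0∞)
    (P : Matrix X Y ℝ) : ℝ :=
  sInf ((fun y => ∫ α, renyi α (condX P y) ∂τ) '' {y | 0 < margY P y})

/-- The conditional entropy `H_{+∞,0}`. -/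
def HposInf {X Y : Type*} [Fintype X] [Fintype Y] (P : Matrix X Y ℝ) : ℝ :=
  sSup ((fun y => renyi 0 (condX P y)) '' {y | 0 < margY P y})

/-- The parameter set `𝒟_bulk`. -/
def Dbulk : Set (ℝ × Measure ℝ≥0∞) :=
  {p | p.1 ≠ 0 ∧ IsProbabilityMeasure p.2 ∧
    ∀ (d n n' : ℕ) (P : Matrix (Fin d) (Fin n) ℝ) (Q : Matrix (Fin d) (Fin n') ℝ),
      IsJointProb P → CondMixed P Q → Hbulk p.1 p.2 P ≤ Hbulk p.1 p.2 Q}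

/-- The parameter set `𝒟_{-∞}`. -/
def DnegInf : Set (Measure ℝ≥0∞) :=
  {τ | IsProbabilityMeasure τ ∧
    ∀ (d n n' : ℕ) (P : Matrix (Fin d) (Fin n) ℝ) (Q : Matrix (Fin d) (Fin n') ℝ),
      IsJointProb P → CondMixed P Q → HnegInf τ P ≤ HnegInf τ Q}

/-- `P'` is obtained from `P` by relabeling (injections) and embedding, with zeros elsewhere. -/
def Embeds {X Y X' Y' : Type*} [Fintype X] [Fintype Y] [Fintype X'] [Fintype Y']
    (P : Matrix X Y ℝ) (P' : Matrix X' Y' ℝ) : Prop :=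
  ∃ (f : X ↪ X') (g : Y ↪ Y'),
    (∀ x y, P' (f x) (g y) = P x y) ∧
    (∀ x' y', P' x' y' ≠ 0 → (∃ x, f x = x') ∧ (∃ y, g y = y'))

/-- Conditional majorization: after a common embedding, a conditionally mixing channel maps
(the embedding of) `P` to (the embedding of) `Q`. -/
def CondMajorizes {X Y X' Y' : Type*} [Fintype X] [Fintype Y] [Fintype X'] [Fintype Y']
    (P : Matrix X Y ℝ) (Q : Matrix X' Y' ℝ) : Prop :=
  ∃ (m n n' : ℕ) (P' : Matrix (Fin m) (Fin n) ℝ) (Q' : Matrix (Fin m) (Fin n') ℝ),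
    Embeds P P' ∧ Embeds Q Q' ∧ CondMixed P' Q'

/-- Kronecker product of matrices. -/
def kron {X Y X' Y' : Type*} (P : Matrix X Y ℝ) (Q : Matrix X' Y' ℝ) :
    Matrix (X × X') (Y × Y') ℝ :=
  Matrix.of fun x y => P x.1 y.1 * Q x.2 y.2

/-- `n`-fold Kronecker power of a matrix. -/
def kronPow {X Y : Type*} (P : Matrix X Y ℝ) (n : ℕ) :
    Matrix (Fin n → X) (Fin n → Y) ℝ :=
  Matrix.of fun x y => ∏ i, P (x i) (y i)

/-- Sum of all entries of a matrix. -/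
def totalMass {X Y : Type*} [Fintype X] [Fintype Y] (P : Matrix X Y ℝ) : ℝ :=
  ∑ x, ∑ y, P x y

/-- `α/(1-α)`, with the convention that it equals `-1` at `α = ∞`. -/
def aRatio (α : ℝ≥0∞) : ℝ := if α = ⊤ then -1 else α.toReal / (1 - α.toReal)

/-- `α/(α-1)`, with the convention that it equals `1` at `α = ∞`. -/
def aRatio' (α : ℝ≥0∞) : ℝ := if α = ⊤ then 1 else α.toReal / (α.toReal - 1)

/-- Rényi relative entropy `D_α(p‖r)`. -/
def relRenyi {X : Type*} [Fintype X] (α : ℝ≥0∞) (p r : X → ℝ) : ℝ :=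
  if α = 1 then ∑ x, p x * log2 (p x / r x)
  else if α = ⊤ then log2 (⨆ x, p x / r x)
  else (α.toReal - 1)⁻¹ * log2 (∑ x, p x ^ α.toReal * r x ^ (1 - α.toReal))

/-- The quantity `I_{t,τ}(P‖R)`. -/
def Ibulk {X Y : Type*} [Fintype X] [Fintype Y] (t : ℝ) (τ : Measure ℝ≥0∞)
    (P : Matrix X Y ℝ) (R : X → ℝ) : ℝ :=
  -t⁻¹ * log2 (∑ y ∈ Finset.univ.filter (fun y => 0 < margY P y),
    margY P y * exp2 (-t * ∫ α, relRenyi α (condX P y) R ∂τ))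

/-- The quantity `I_{-∞,τ}(P‖R)`. -/
def InegInf {X Y : Type*} [Fintype X] [Fintype Y] (τ : Measure ℝ≥0∞)
    (P : Matrix X Y ℝ) (R : X → ℝ) : ℝ :=
  sSup ((fun y => ∫ α, relRenyi α (condX P y) R ∂τ) '' {y | 0 < margY P y})

/-- A conditioned `R`-preserving channel maps `P` to `Q`. -/
def CondPreserving {X Y Y' : Type*} [Fintype X] [Fintype Y] [Fintype Y'] (R : X → ℝ)
    (P : Matrix X Y ℝ) (Q : Matrix X Y' ℝ) : Prop :=
  ∃ (k : ℕ) (G : Fin k → Matrix X X ℝ) (D : Fin k → Matrix Y Y' ℝ),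
    (∀ i a b, 0 ≤ G i a b) ∧
    (∀ i b, ∑ a, G i a b = 1) ∧
    (∀ i, (G i).mulVec R = R) ∧
    (∀ i a b, 0 ≤ D i a b) ∧
    (∀ a, ∑ b, ∑ i, D i a b = 1) ∧
    Q = ∑ i, G i * P * D i

/-- Total variation distance between two matrices. -/
def tvDist {X Y : Type*} [Fintype X] [Fintype Y] (P Q : Matrix X Y ℝ) : ℝ :=
  (1 / 2) * ∑ x, ∑ y, |P x y - Q x y|

section AuxHzeroA

open Finset

variable {X : Type*} [Fintype X]

lemma renyi_zero_eq (p : X → ℝ) :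
    renyi 0 p = log2 (Nat.card {x : X // 0 < p x}) := by simp [renyi]

lemma renyi_one_eq (p : X → ℝ) : renyi 1 p = -∑ x, p x * log2 (p x) := by simp [renyi]

lemma renyi_mid_eq {α : ℝ≥0∞} (h0 : α ≠ 0) (h1 : α ≠ 1) (ht : α ≠ ⊤) (p : X → ℝ) :
    renyi α p = (1 - α.toReal)⁻¹ * log2 (∑ x, p x ^ α.toReal) := by
  simp [renyi, h0, h1, ht]

lemma log2_eq (x : ℝ) : log2 x = (Real.log 2)⁻¹ * Real.log x := by
  rw [log2, Real.logb]; ring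

lemma log2_le_log2 {x y : ℝ} (hx : 0 < x) (hxy : x ≤ y) : log2 x ≤ log2 y :=
  Real.logb_le_logb_of_le one_lt_two hx hxy

lemma exists_pos_of_probVec (p : X → ℝ) (hp : IsProbVec p) : ∃ x, 0 < p x := by
  by_contra h
  push_neg at h
  have h2 : ∑ x, p x ≤ 0 := Finset.sum_nonpos fun x _ => h x
  rw [hp.2] at h2; linarith

lemma card_pos_support (p : X → ℝ) (hp : IsProbVec p) :
    (0 : ℝ) < (univ.filter fun x => 0 < p x).card := by
  obtain ⟨x, hx⟩ := exists_pos_of_probVec p hp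
  exact_mod_cast Finset.card_pos.mpr ⟨x, by simp [hx]⟩

lemma natCard_support_eq (p : X → ℝ) :
    (Nat.card {x : X // 0 < p x}) = (univ.filter fun x => 0 < p x).card := by
  simp [Nat.card_eq_fintype_card, Fintype.card_subtype]

lemma probVec_matVec (S : Matrix X X ℝ) (hS : DoublyStochastic S) (p : X → ℝ)
    (hp : IsProbVec p) : IsProbVec (fun x => ∑ z, S x z * p z) := by
  obtain ⟨hSnn, hSrow, hScol⟩ := hS
  refine ⟨fun x => Finset.sum_nonneg fun z _ => mul_nonneg (hSnn x z) (hp.1 z), ?_⟩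
  rw [Finset.sum_comm]
  calc ∑ z, ∑ x, S x z * p z = ∑ z, (∑ x, S x z) * p z := by
        exact Finset.sum_congr rfl fun z _ => (Finset.sum_mul _ _ _).symm
    _ = 1 := by simp [hScol, hp.2]

lemma schur_renyi_le (α : ℝ≥0∞) (hα : α ≤ 1) (S : Matrix X X ℝ)
    (hS : DoublyStochastic S) (p : X → ℝ) (hp : IsProbVec p) :
    renyi α p ≤ renyi α (fun x => ∑ z, S x z * p z) := by
  classical
  obtain ⟨hSnn, hSrow, hScol⟩ := hS
  have hq := probVec_matVec S ⟨hSnn, hSrow, hScol⟩ p hp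
  set q : X → ℝ := fun x => ∑ z, S x z * p z with hqdef
  have hαtop : α ≠ ⊤ := ne_top_of_le_ne_top ENNReal.one_ne_top hα
  rcases eq_or_ne α 0 with rfl | hα0
  · rw [renyi_zero_eq, renyi_zero_eq, natCard_support_eq, natCard_support_eq]
    set A := univ.filter fun x => 0 < p x with hA
    set B := univ.filter fun x => 0 < q x with hB
    have hAB : (A.card : ℝ) ≤ B.card := by
      have h1 : ∀ j ∈ A, ∑ i ∈ B, S i j = 1 := by
        intro j hj
        have hpj : 0 < p j := by simpa [hA] using hj
        have h2 : ∑ i ∈ B, S i j = ∑ i, S i j := by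
          apply Finset.sum_subset B.subset_univ
          intro i _ hiB
          by_contra hne
          have hpos : 0 < S i j := lt_of_le_of_ne (hSnn i j) (Ne.symm hne)
          have hqi : 0 < q i := by
            have hle : S i j * p j ≤ q i :=
              Finset.single_le_sum (f := fun z => S i z * p z)
                (fun z _ => mul_nonneg (hSnn i z) (hp.1 z)) (Finset.mem_univ j)
            nlinarith
          exact hiB (by simp [hB, hqi])
        rw [h2, hScol j]
      calc (A.card : ℝ) = ∑ j ∈ A, ∑ i ∈ B, S i j := by
            rw [Finset.sum_congr rfl h1]; simp
        _ = ∑ i ∈ B, ∑ j ∈ A, S i j := Finset.sum_comm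
        _ ≤ ∑ i ∈ B, (1 : ℝ) := by
            apply Finset.sum_le_sum
            intro i _
            calc ∑ j ∈ A, S i j ≤ ∑ j, S i j :=
                Finset.sum_le_sum_of_subset_of_nonneg A.subset_univ
                  (fun j _ _ => hSnn i j)
              _ = 1 := hSrow i
        _ = B.card := by simp
    exact log2_le_log2 (card_pos_support p hp) hAB
  rcases eq_or_ne α 1 with rfl | hα1
  · rw [renyi_one_eq, renyi_one_eq, neg_le_neg_iff]
    have hconv : ConvexOn ℝ (Set.Ici 0) (fun u : ℝ => (Real.log 2)⁻¹ • (u * Real.log u)) :=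
      Real.convexOn_mul_log.smul (by positivity)
    have key : ∀ x, q x * log2 (q x) ≤ ∑ z, S x z * (p z * log2 (p z)) := by
      intro x
      have hJ := hconv.map_sum_le (t := Finset.univ) (w := S x) (p := p)
        (fun z _ => hSnn x z) (hSrow x) (fun z _ => hp.1 z)
      simp only [smul_eq_mul] at hJ
      calc q x * log2 (q x) = (Real.log 2)⁻¹ * ((∑ z, S x z * p z) * Real.log (∑ z, S x z * p z)) := by
            rw [hqdef]; rw [log2_eq]; ring
        _ ≤ ∑ z, S x z * ((Real.log 2)⁻¹ * (p z * Real.log (p z))) := hJ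
        _ = ∑ z, S x z * (p z * log2 (p z)) := by
            exact Finset.sum_congr rfl fun z _ => by rw [log2_eq]; ring
    calc ∑ x, q x * log2 (q x) ≤ ∑ x, ∑ z, S x z * (p z * log2 (p z)) :=
          Finset.sum_le_sum fun x _ => key x
      _ = ∑ z, (∑ x, S x z) * (p z * log2 (p z)) := by
          rw [Finset.sum_comm]
          exact Finset.sum_congr rfl fun z _ => (Finset.sum_mul _ _ _).symm
      _ = ∑ z, p z * log2 (p z) := by simp [hScol]
  · have hr0 : 0 < α.toReal := ENNReal.toReal_pos hα0 hαtop
    have hr1 : α.toReal < 1 := by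
      rcases lt_or_eq_of_le hα with h | h
      · simpa using (ENNReal.toReal_lt_toReal hαtop ENNReal.one_ne_top).mpr h
      · exact absurd h hα1
    rw [renyi_mid_eq hα0 hα1 hαtop, renyi_mid_eq hα0 hα1 hαtop]
    set r := α.toReal with hrdef
    have hsum_le : ∑ x, p x ^ r ≤ ∑ x, q x ^ r := by
      have key : ∀ x, ∑ z, S x z * p z ^ r ≤ q x ^ r := by
        intro x
        have hJ := (Real.concaveOn_rpow hr0.le hr1.le).le_map_sum (t := Finset.univ)
          (w := S x) (p := p) (fun z _ => hSnn x z) (hSrow x) (fun z _ => hp.1 z)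
        simpa [smul_eq_mul] using hJ
      calc ∑ x, p x ^ r = ∑ x, (∑ z, S z x) * p x ^ r := by simp [hScol]
        _ = ∑ x, ∑ z, S z x * p x ^ r := by
            exact Finset.sum_congr rfl fun x _ => Finset.sum_mul _ _ _
        _ = ∑ z, ∑ x, S z x * p x ^ r := Finset.sum_comm
        _ ≤ ∑ z, q z ^ r := Finset.sum_le_sum fun z _ => key z
    have hppos : 0 < ∑ x, p x ^ r := by
      obtain ⟨x, hx⟩ := exists_pos_of_probVec p hp
      exact Finset.sum_pos' (fun z _ => Real.rpow_nonneg (hp.1 z) r)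
        ⟨x, Finset.mem_univ x, Real.rpow_pos_of_pos hx r⟩
    exact mul_le_mul_of_nonneg_left (log2_le_log2 hppos hsum_le)
      (inv_nonneg.mpr (by linarith))

lemma mix_renyi_le {J : Type*} [Fintype J] (α : ℝ≥0∞) (hα : α ≤ 1)
    (t : Finset J) (w : J → ℝ) (p : J → X → ℝ)
    (hw : ∀ j ∈ t, 0 < w j) (hw1 : ∑ j ∈ t, w j = 1)
    (hp : ∀ j ∈ t, IsProbVec (p j)) :
    ∑ j ∈ t, w j * renyi α (p j) ≤ renyi α (fun x => ∑ j ∈ t, w j * p j x) := by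
  classical
  have htne : t.Nonempty := by
    rcases t.eq_empty_or_nonempty with rfl | h
    · simp at hw1
    · exact h
  have hq : IsProbVec (fun x => ∑ j ∈ t, w j * p j x) := by
    constructor
    · intro x; exact Finset.sum_nonneg fun j hj => mul_nonneg (hw j hj).le ((hp j hj).1 x)
    · rw [Finset.sum_comm]
      calc ∑ j ∈ t, ∑ x, w j * p j x = ∑ j ∈ t, w j * ∑ x, p j x := by
            exact Finset.sum_congr rfl fun j _ => (Finset.mul_sum _ _ _).symm
        _ = ∑ j ∈ t, w j := Finset.sum_congr rfl fun j hj => by rw [(hp j hj).2, mul_one]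
        _ = 1 := hw1
  set q : X → ℝ := fun x => ∑ j ∈ t, w j * p j x with hqdef
  have hαtop : α ≠ ⊤ := ne_top_of_le_ne_top ENNReal.one_ne_top hα
  rcases eq_or_ne α 0 with rfl | hα0
  · rw [renyi_zero_eq, natCard_support_eq]
    have hsub : ∀ j ∈ t,
        ((univ.filter fun x => 0 < p j x).card : ℝ) ≤ (univ.filter fun x => 0 < q x).card := by
      intro j hj
      have hss : (univ.filter fun x => 0 < p j x) ⊆ (univ.filter fun x => 0 < q x) := by
        intro x hx
        simp only [Finset.mem_filter, Finset.mem_univ, true_and] at hx ⊢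
        have h1 : w j * p j x ≤ q x :=
          Finset.single_le_sum (f := fun i => w i * p i x)
            (fun i hi => mul_nonneg (hw i hi).le ((hp i hi).1 x)) hj
        nlinarith [hw j hj]
      exact_mod_cast Finset.card_le_card hss
    calc ∑ j ∈ t, w j * renyi 0 (p j)
        = ∑ j ∈ t, w j * log2 ((univ.filter fun x => 0 < p j x).card) := by
          exact Finset.sum_congr rfl fun j _ => by rw [renyi_zero_eq, natCard_support_eq]
      _ ≤ ∑ j ∈ t, w j * log2 ((univ.filter fun x => 0 < q x).card) := by
          apply Finset.sum_le_sum
          intro j hj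
          exact mul_le_mul_of_nonneg_left
            (log2_le_log2 (card_pos_support (p j) (hp j hj)) (hsub j hj)) (hw j hj).le
      _ = log2 ((univ.filter fun x => 0 < q x).card) := by
          rw [← Finset.sum_mul, hw1, one_mul]
  rcases eq_or_ne α 1 with rfl | hα1
  · have hconv : ConvexOn ℝ (Set.Ici 0) (fun u : ℝ => (Real.log 2)⁻¹ • (u * Real.log u)) :=
      Real.convexOn_mul_log.smul (by positivity)
    have key : ∀ x, q x * log2 (q x) ≤ ∑ j ∈ t, w j * (p j x * log2 (p j x)) := by
      intro x
      have hJ := hconv.map_sum_le (t := t) (w := w) (p := fun j => p j x)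
        (fun j hj => (hw j hj).le) hw1 (fun j hj => (hp j hj).1 x)
      simp only [smul_eq_mul] at hJ
      calc q x * log2 (q x)
          = (Real.log 2)⁻¹ * ((∑ j ∈ t, w j * p j x) * Real.log (∑ j ∈ t, w j * p j x)) := by
            rw [hqdef]; rw [log2_eq]; ring
        _ ≤ ∑ j ∈ t, w j * ((Real.log 2)⁻¹ * (p j x * Real.log (p j x))) := hJ
        _ = ∑ j ∈ t, w j * (p j x * log2 (p j x)) := by
            exact Finset.sum_congr rfl fun j _ => by rw [log2_eq]; ring
    rw [renyi_one_eq]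
    have hL : ∑ j ∈ t, w j * renyi 1 (p j) = -∑ x, ∑ j ∈ t, w j * (p j x * log2 (p j x)) := by
      calc ∑ j ∈ t, w j * renyi 1 (p j)
          = ∑ j ∈ t, -∑ x, w j * (p j x * log2 (p j x)) := by
            exact Finset.sum_congr rfl fun j _ => by
              rw [renyi_one_eq, mul_neg, Finset.mul_sum]
        _ = -∑ j ∈ t, ∑ x, w j * (p j x * log2 (p j x)) := by
            rw [Finset.sum_neg_distrib]
        _ = -∑ x, ∑ j ∈ t, w j * (p j x * log2 (p j x)) := by rw [Finset.sum_comm]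
    rw [hL, neg_le_neg_iff]
    exact Finset.sum_le_sum fun x _ => key x
  · have hr0 : 0 < α.toReal := ENNReal.toReal_pos hα0 hαtop
    have hr1 : α.toReal < 1 := by
      rcases lt_or_eq_of_le hα with h | h
      · simpa using (ENNReal.toReal_lt_toReal hαtop ENNReal.one_ne_top).mpr h
      · exact absurd h hα1
    rw [renyi_mid_eq hα0 hα1 hαtop]
    set r := α.toReal with hrdef
    have hA : ∀ j ∈ t, 0 < ∑ x, p j x ^ r := by
      intro j hj
      obtain ⟨x, hx⟩ := exists_pos_of_probVec (p j) (hp j hj)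
      exact Finset.sum_pos' (fun z _ => Real.rpow_nonneg ((hp j hj).1 z) r)
        ⟨x, Finset.mem_univ x, Real.rpow_pos_of_pos hx r⟩
    have step1 : ∑ j ∈ t, w j * ∑ x, p j x ^ r ≤ ∑ x, q x ^ r := by
      have key : ∀ x, ∑ j ∈ t, w j * p j x ^ r ≤ q x ^ r := by
        intro x
        have hJ := (Real.concaveOn_rpow hr0.le hr1.le).le_map_sum (t := t) (w := w)
          (p := fun j => p j x) (fun j hj => (hw j hj).le) hw1 (fun j hj => (hp j hj).1 x)
        simpa [smul_eq_mul] using hJ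
      calc ∑ j ∈ t, w j * ∑ x, p j x ^ r = ∑ j ∈ t, ∑ x, w j * p j x ^ r := by
            exact Finset.sum_congr rfl fun j _ => Finset.mul_sum _ _ _
        _ = ∑ x, ∑ j ∈ t, w j * p j x ^ r := Finset.sum_comm
        _ ≤ ∑ x, q x ^ r := Finset.sum_le_sum fun x _ => key x
    have hwApos : 0 < ∑ j ∈ t, w j * ∑ x, p j x ^ r := by
      obtain ⟨j, hj⟩ := htne
      exact Finset.sum_pos (fun i hi => mul_pos (hw i hi) (hA i hi)) ⟨j, hj⟩
    have hconc : ConcaveOn ℝ (Set.Ioi 0) (fun u : ℝ => (Real.log 2)⁻¹ • Real.log u) :=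
      strictConcaveOn_log_Ioi.concaveOn.smul (by positivity)
    have step2 : ∑ j ∈ t, w j * log2 (∑ x, p j x ^ r) ≤
        log2 (∑ j ∈ t, w j * ∑ x, p j x ^ r) := by
      have hJ := hconc.le_map_sum (t := t) (w := w) (p := fun j => ∑ x, p j x ^ r)
        (fun j hj => (hw j hj).le) hw1 (fun j hj => Set.mem_Ioi.mpr (hA j hj))
      simp only [smul_eq_mul] at hJ
      calc ∑ j ∈ t, w j * log2 (∑ x, p j x ^ r)
          = ∑ j ∈ t, w j * ((Real.log 2)⁻¹ * Real.log (∑ x, p j x ^ r)) := by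
            exact Finset.sum_congr rfl fun j _ => by rw [log2_eq]
        _ ≤ (Real.log 2)⁻¹ * Real.log (∑ j ∈ t, w j * ∑ x, p j x ^ r) := hJ
        _ = log2 (∑ j ∈ t, w j * ∑ x, p j x ^ r) := (log2_eq _).symm
    have h1r : (0 : ℝ) ≤ (1 - r)⁻¹ := inv_nonneg.mpr (by linarith)
    calc ∑ j ∈ t, w j * renyi α (p j)
        = (1 - r)⁻¹ * ∑ j ∈ t, w j * log2 (∑ x, p j x ^ r) := by
          rw [Finset.mul_sum]
          exact Finset.sum_congr rfl fun j _ => by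
            rw [renyi_mid_eq hα0 hα1 hαtop, ← hrdef]; ring
      _ ≤ (1 - r)⁻¹ * log2 (∑ j ∈ t, w j * ∑ x, p j x ^ r) :=
          mul_le_mul_of_nonneg_left step2 h1r
      _ ≤ (1 - r)⁻¹ * log2 (∑ x, q x ^ r) :=
          mul_le_mul_of_nonneg_left (log2_le_log2 hwApos step1) h1r

end AuxHzeroA

/-- For `α ∈ [0,1]`, the quantity
`H_{0,α}(X|Y)_P = ∑_{y : P_Y(y)>0} P_Y(y)·H_α(P_{X|Y=y})` is monotone non-decreasing under
conditionally mixing channels. -/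
theorem HzeroA_monotone (α : ℝ≥0∞) (hα : α ≤ 1) :
    ∀ (X Y Y' : Type) [Fintype X] [Fintype Y] [Fintype Y']
      (P : Matrix X Y ℝ) (Q : Matrix X Y' ℝ),
      IsJointProb P → IsJointProb Q → CondMixed P Q →
      HzeroA α P ≤ HzeroA α Q := by
  intro X Y Y' _ _ _ P Q hP hQ hPQ
  classical
  obtain ⟨k, S, D, hS, hDnn, hDrow, hQeq⟩ := hPQ
  have hPnn := hP.1
  have hMPnn : ∀ a, 0 ≤ margY P a := fun a => Finset.sum_nonneg fun x _ => hPnn x a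
  have hMQnn : ∀ b, 0 ≤ margY Q b := fun b => Finset.sum_nonneg fun x _ => hQ.1 x b
  have hPzero : ∀ a, margY P a = 0 → ∀ x, P x a = 0 := by
    intro a ha x
    exact (Finset.sum_eq_zero_iff_of_nonneg (fun x _ => hPnn x a)).mp ha x (Finset.mem_univ x)
  have hcondnn : ∀ a x, 0 ≤ condX P a x := fun a x => div_nonneg (hPnn x a) (hMPnn a)
  have hcondPV : ∀ a, 0 < margY P a → IsProbVec (condX P a) := by
    intro a ha
    refine ⟨hcondnn a, ?_⟩
    show ∑ x, P x a / margY P a = 1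
    rw [← Finset.sum_div]
    exact div_self (ne_of_gt ha)
  have hQcol : ∀ x b, Q x b = ∑ i, ∑ a, D i a b * ∑ z, S i x z * P z a := by
    intro x b
    rw [hQeq, Matrix.sum_apply]
    apply Finset.sum_congr rfl
    intro i _
    rw [Matrix.mul_apply]
    apply Finset.sum_congr rfl
    intro a _
    rw [Matrix.mul_apply, mul_comm]
  have hcolS : ∀ (i : Fin k) a, ∑ x, ∑ z, S i x z * P z a = margY P a := by
    intro i a
    rw [Finset.sum_comm]
    calc ∑ z, ∑ x, S i x z * P z a = ∑ z, (∑ x, S i x z) * P z a :=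
          Finset.sum_congr rfl fun z _ => (Finset.sum_mul _ _ _).symm
      _ = margY P a := by
          apply Finset.sum_congr rfl
          intro z _
          rw [(hS i).2.2 z, one_mul]
  have hMQeq : ∀ b, margY Q b = ∑ i, ∑ a, D i a b * margY P a := by
    intro b
    calc margY Q b = ∑ x, ∑ i, ∑ a, D i a b * ∑ z, S i x z * P z a :=
          Finset.sum_congr rfl fun x _ => hQcol x b
      _ = ∑ i, ∑ a, D i a b * margY P a := by
          rw [Finset.sum_comm]
          apply Finset.sum_congr rfl
          intro i _
          rw [Finset.sum_comm]
          apply Finset.sum_congr rfl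
          intro a _
          rw [← Finset.mul_sum, hcolS i a]
  have key : ∀ b, 0 < margY Q b →
      ∑ i, ∑ a, D i a b * margY P a * renyi α (condX P a) ≤
        margY Q b * renyi α (condX Q b) := by
    intro b hb
    set t : Finset (Fin k × Y) :=
      Finset.univ.filter (fun j => 0 < D j.1 j.2 b * margY P j.2) with ht
    set w : Fin k × Y → ℝ := fun j => D j.1 j.2 b * margY P j.2 / margY Q b with hwdef
    set v : Fin k × Y → X → ℝ := fun j x => ∑ z, S j.1 x z * condX P j.2 z with hvdef
    have hmemt : ∀ j : Fin k × Y, j ∈ t ↔ 0 < D j.1 j.2 b * margY P j.2 := by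
      intro j; simp [ht]
    have hout : ∀ j : Fin k × Y, j ∉ t → D j.1 j.2 b * margY P j.2 = 0 := by
      intro j hj
      have h1 : ¬ 0 < D j.1 j.2 b * margY P j.2 := fun h => hj ((hmemt j).mpr h)
      exact le_antisymm (not_lt.mp h1) (mul_nonneg (hDnn j.1 j.2 b) (hMPnn j.2))
    have hMPt : ∀ j ∈ t, 0 < margY P j.2 := by
      intro j hj
      have h1 := (hmemt j).mp hj
      rcases (hMPnn j.2).lt_or_eq with h | h
      · exact h
      · rw [← h, mul_zero] at h1; exact absurd h1 (lt_irrefl 0)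
    have hwpos : ∀ j ∈ t, 0 < w j := fun j hj => div_pos ((hmemt j).mp hj) hb
    have hwsum : ∑ j ∈ t, w j = 1 := by
      have h2 : ∑ j ∈ t, w j = ∑ j : Fin k × Y, w j := by
        apply Finset.sum_subset t.subset_univ
        intro j _ hj
        rw [hwdef]
        simp [hout j hj]
      have h4 : ∑ j : Fin k × Y, D j.1 j.2 b * margY P j.2 = margY Q b := by
        rw [hMQeq b, Fintype.sum_prod_type]
      calc ∑ j ∈ t, w j = ∑ j : Fin k × Y, w j := h2
        _ = (∑ j : Fin k × Y, D j.1 j.2 b * margY P j.2) / margY Q b := by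
            simp only [hwdef]
            rw [Finset.sum_div]
        _ = 1 := by rw [h4, div_self (ne_of_gt hb)]
    have hvPV : ∀ j ∈ t, IsProbVec (v j) :=
      fun j hj => probVec_matVec (S j.1) (hS j.1) (condX P j.2) (hcondPV j.2 (hMPt j hj))
    have hmix : (fun x => ∑ j ∈ t, w j * v j x) = condX Q b := by
      funext x
      have hfull : ∑ j ∈ t, w j * v j x = ∑ j : Fin k × Y, w j * v j x := by
        apply Finset.sum_subset t.subset_univ
        intro j _ hj
        have hwj : w j = 0 := by rw [hwdef]; simp [hout j hj]
        rw [hwj, zero_mul]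
      have hterm : ∀ j : Fin k × Y,
          w j * v j x = D j.1 j.2 b * (∑ z, S j.1 x z * P z j.2) / margY Q b := by
        intro j
        rcases (hMPnn j.2).lt_or_eq with hMP | hMP
        · have hv2 : v j x = (∑ z, S j.1 x z * P z j.2) / margY P j.2 := by
            rw [hvdef, Finset.sum_div]
            apply Finset.sum_congr rfl
            intro z _
            show S j.1 x z * (P z j.2 / margY P j.2) = S j.1 x z * P z j.2 / margY P j.2
            ring
          rw [hv2, hwdef]
          field_simp
        · have hP0 : ∀ z, P z j.2 = 0 := hPzero j.2 hMP.symm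
          rw [hwdef, hvdef]
          simp [hP0, hMP.symm]
      rw [hfull, Finset.sum_congr rfl (fun j _ => hterm j)]
      show _ = Q x b / margY Q b
      rw [← Finset.sum_div]
      congr 1
      rw [hQcol x b, Fintype.sum_prod_type]
    have hmain := mix_renyi_le α hα t w v hwpos hwsum hvPV
    rw [hmix] at hmain
    have hschur : ∀ j ∈ t, renyi α (condX P j.2) ≤ renyi α (v j) := by
      intro j hj
      exact schur_renyi_le α hα (S j.1) (hS j.1) (condX P j.2) (hcondPV j.2 (hMPt j hj))
    have h3 : ∑ j ∈ t, w j * renyi α (condX P j.2) ≤ renyi α (condX Q b) :=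
      le_trans (Finset.sum_le_sum fun j hj =>
        mul_le_mul_of_nonneg_left (hschur j hj) (hwpos j hj).le) hmain
    have h4 : margY Q b * ∑ j ∈ t, w j * renyi α (condX P j.2) =
        ∑ i, ∑ a, D i a b * margY P a * renyi α (condX P a) := by
      rw [Finset.mul_sum]
      have h5 : ∀ j ∈ t, margY Q b * (w j * renyi α (condX P j.2)) =
          D j.1 j.2 b * margY P j.2 * renyi α (condX P j.2) := by
        intro j _
        rw [hwdef]
        field_simp
      rw [Finset.sum_congr rfl h5]
      have h6 : ∑ j ∈ t, D j.1 j.2 b * margY P j.2 * renyi α (condX P j.2) =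
          ∑ j : Fin k × Y, D j.1 j.2 b * margY P j.2 * renyi α (condX P j.2) := by
        apply Finset.sum_subset t.subset_univ
        intro j _ hj
        rw [hout j hj, zero_mul]
      rw [h6, Fintype.sum_prod_type]
    calc ∑ i, ∑ a, D i a b * margY P a * renyi α (condX P a)
        = margY Q b * ∑ j ∈ t, w j * renyi α (condX P j.2) := h4.symm
      _ ≤ margY Q b * renyi α (condX Q b) := mul_le_mul_of_nonneg_left h3 (hMQnn b)
  have key0 : ∀ b, ¬ 0 < margY Q b →
      ∑ i, ∑ a, D i a b * margY P a * renyi α (condX P a) = 0 := by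
    intro b hb
    have h0 : margY Q b = 0 := le_antisymm (not_lt.mp hb) (hMQnn b)
    have hsum : ∑ i, ∑ a, D i a b * margY P a = 0 := by rw [← hMQeq b, h0]
    have hz : ∀ i a, D i a b * margY P a = 0 := by
      intro i a
      have h1 := (Finset.sum_eq_zero_iff_of_nonneg (fun i _ =>
        Finset.sum_nonneg fun a _ => mul_nonneg (hDnn i a b) (hMPnn a))).mp hsum i
        (Finset.mem_univ i)
      exact (Finset.sum_eq_zero_iff_of_nonneg (fun a _ =>
        mul_nonneg (hDnn i a b) (hMPnn a))).mp h1 a (Finset.mem_univ a)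
    apply Finset.sum_eq_zero
    intro i _
    apply Finset.sum_eq_zero
    intro a _
    rw [hz i a, zero_mul]
  have hHP : HzeroA α P = ∑ a, margY P a * renyi α (condX P a) := by
    rw [HzeroA]
    apply Finset.sum_subset (Finset.filter_subset _ _)
    intro a _ ha
    have h1 : ¬ 0 < margY P a := by
      intro h
      exact ha (Finset.mem_filter.mpr ⟨Finset.mem_univ a, h⟩)
    rw [le_antisymm (not_lt.mp h1) (hMPnn a), zero_mul]
  have hPexp : ∑ a, margY P a * renyi α (condX P a) =
      ∑ b, ∑ i, ∑ a, D i a b * margY P a * renyi α (condX P a) := by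
    have hper : ∀ a, margY P a * renyi α (condX P a) =
        ∑ b, ∑ i, D i a b * (margY P a * renyi α (condX P a)) := by
      intro a
      calc margY P a * renyi α (condX P a)
          = (∑ b, ∑ i, D i a b) * (margY P a * renyi α (condX P a)) := by
            rw [hDrow a, one_mul]
        _ = ∑ b, ∑ i, D i a b * (margY P a * renyi α (condX P a)) := by
            rw [Finset.sum_mul]
            exact Finset.sum_congr rfl fun b _ => Finset.sum_mul _ _ _
    calc ∑ a, margY P a * renyi α (condX P a)
        = ∑ a, ∑ b, ∑ i, D i a b * (margY P a * renyi α (condX P a)) :=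
          Finset.sum_congr rfl fun a _ => hper a
      _ = ∑ b, ∑ a, ∑ i, D i a b * (margY P a * renyi α (condX P a)) := Finset.sum_comm
      _ = ∑ b, ∑ i, ∑ a, D i a b * margY P a * renyi α (condX P a) := by
          apply Finset.sum_congr rfl
          intro b _
          rw [Finset.sum_comm]
          exact Finset.sum_congr rfl fun i _ =>
            Finset.sum_congr rfl fun a _ => (mul_assoc _ _ _).symm
  calc HzeroA α P
      = ∑ b, ∑ i, ∑ a, D i a b * margY P a * renyi α (condX P a) := by
        rw [hHP, hPexp]
    _ = ∑ b ∈ Finset.univ.filter (fun b => 0 < margY Q b),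
          ∑ i, ∑ a, D i a b * margY P a * renyi α (condX P a) := by
        symm
        apply Finset.sum_subset (Finset.filter_subset _ _)
        intro b _ hb
        apply key0 b
        intro h
        exact hb (Finset.mem_filter.mpr ⟨Finset.mem_univ b, h⟩)
    _ ≤ ∑ b ∈ Finset.univ.filter (fun b => 0 < margY Q b),
          margY Q b * renyi α (condX Q b) := by
        apply Finset.sum_le_sum
        intro b hb
        exact key b (Finset.mem_filter.mp hb).2
    _ = HzeroA α Q := rfl
end
end

section
/- Let α ∈ (1,∞]. Then there exists d ∈ ℕ such that the function g : (ℝ≥0)^d ∖ {0} → ℝ defined by g(x) = ‖x‖₁ · H_α(x/‖x‖₁), where ‖x‖₁ = ∑_i x_i, is not concave. Consequently, for α ∈ [0,∞], the function g is concave for every dimension d only if α ∈ [0,1]. -/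
open MeasureTheory
open scoped ENNReal

noncomputable section

/-!
For `α > 1` the Rényi entropy is controlled by the largest probability:
`H_α(p) ≤ α/(α-1) · (-log p_i)`. If `g(x) = ‖x‖₁ · H_α(x/‖x‖₁)` were concave, the midpoint of
a point mass `δ` (entropy `0`) and the uniform distribution `u` on `m` other points
(entropy `log m`) would have entropy at least `(log m)/2`; but that midpoint has an atom of
mass `1/2`, so its entropy is at most `α/(α-1)`. This fails once `log m > 2α/(α-1)`.
-/

open Finset

variable {X : Type*} [Fintype X]

def scaledRenyi (α : ℝ≥0∞) (x : X → ℝ) : ℝ :=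
  (∑ i, x i) * renyi α (fun i => x i / ∑ j, x j)

def uniformOn [DecidableEq X] (s : Finset X) : X → ℝ :=
  fun x => if x ∈ s then (#s : ℝ)⁻¹ else 0

lemma sum_comp_uniformOn [DecidableEq X] (s : Finset X) {f : ℝ → ℝ} (hf : f 0 = 0) :
    ∑ x, f (uniformOn s x) = #s * f (#s)⁻¹ := by
  simp only [uniformOn, apply_ite f, hf, sum_ite_mem, univ_inter, sum_const, nsmul_eq_mul]

lemma iSup_uniformOn [DecidableEq X] {s : Finset X} (hs : s.Nonempty) :
    ⨆ x, uniformOn s x = (#s : ℝ)⁻¹ := by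
  obtain ⟨x₀, hx₀⟩ := hs
  have : Nonempty X := ⟨x₀⟩
  refine le_antisymm (ciSup_le fun x => ?_) ?_
  · unfold uniformOn; split_ifs <;> simp
  · exact le_ciSup_of_le (Set.finite_range _).bddAbove x₀ (by simp [uniformOn, hx₀])

lemma isProbVec_uniformOn [DecidableEq X] {s : Finset X} (hs : s.Nonempty) :
    IsProbVec (uniformOn s) := by
  have hcard : (#s : ℝ) ≠ 0 := by exact_mod_cast hs.card_pos.ne'
  refine ⟨fun x => ?_, ?_⟩
  · unfold uniformOn; split_ifs <;> positivity
  · simpa using sum_comp_uniformOn s (f := id) rfl ▸ mul_inv_cancel₀ hcard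

lemma IsProbVec.ne_zero {p : X → ℝ} (hp : IsProbVec p) : p ≠ 0 := by
  rintro rfl
  simpa using hp.2

lemma IsProbVec.add_smul {p q : X → ℝ} (hp : IsProbVec p) (hq : IsProbVec q) {a b : ℝ}
    (ha : 0 ≤ a) (hb : 0 ≤ b) (hab : a + b = 1) : IsProbVec (a • p + b • q) := by
  refine ⟨fun x => ?_, ?_⟩
  · have := hp.1 x; have := hq.1 x
    simp only [Pi.add_apply, Pi.smul_apply, smul_eq_mul]
    positivity
  · simp [sum_add_distrib, ← mul_sum, hp.2, hq.2, hab]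

lemma scaledRenyi_of_isProbVec (α : ℝ≥0∞) {p : X → ℝ} (hp : IsProbVec p) :
    scaledRenyi α p = renyi α p := by
  simp [scaledRenyi, hp.2]

lemma renyi_uniformOn [DecidableEq X] (α : ℝ≥0∞) {s : Finset X} (hs : s.Nonempty) :
    renyi α (uniformOn s) = log2 #s := by
  have hn : (0 : ℝ) < #s := by exact_mod_cast hs.card_pos
  have hlog_inv : log2 (#s : ℝ)⁻¹ = -log2 #s := Real.logb_inv _ _
  rcases eq_or_ne α 0 with rfl | h0
  · have hsupp : ∀ x, 0 < uniformOn s x ↔ x ∈ s := fun x => by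
      by_cases hx : x ∈ s <;> simp [uniformOn, hx, hn]
    rw [renyi, if_pos rfl, Nat.card_congr (Equiv.subtypeEquivRight hsupp), Nat.card_eq_finsetCard]
  rcases eq_or_ne α 1 with rfl | h1
  · rw [renyi, if_neg h0, if_pos rfl, sum_comp_uniformOn s (f := fun t => t * log2 t) (by simp),
      hlog_inv]
    field_simp
  rcases eq_or_ne α ⊤ with rfl | htop
  · rw [renyi, if_neg h0, if_neg h1, if_pos rfl, iSup_uniformOn hs, hlog_inv, neg_neg]
  have ha0 : α.toReal ≠ 0 := ENNReal.toReal_ne_zero.mpr ⟨h0, htop⟩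
  have ha1 : 1 - α.toReal ≠ 0 := sub_ne_zero.mpr fun h => h1 (by
    rw [← ENNReal.ofReal_toReal htop, ← h, ENNReal.ofReal_one])
  rw [renyi, if_neg h0, if_neg h1, if_neg htop,
    sum_comp_uniformOn s (f := fun t => t ^ α.toReal) (Real.zero_rpow ha0),
    Real.inv_rpow hn.le, ← Real.rpow_neg hn.le]
  unfold log2
  rw [Real.logb_mul hn.ne' (by positivity), Real.logb_rpow_eq_mul_logb_of_pos hn]
  field_simp
  ring

lemma renyi_le_aRatio'_mul_neg_log2 {α : ℝ≥0∞} (hα : 1 < α) {p : X → ℝ} (hp : ∀ x, 0 ≤ p x)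
    {i : X} (hi : 0 < p i) : renyi α p ≤ aRatio' α * -log2 (p i) := by
  have h0 : α ≠ 0 := (zero_lt_one.trans hα).ne'
  rcases eq_or_ne α ⊤ with rfl | htop
  · rw [renyi, if_neg h0, if_neg hα.ne', if_pos rfl, aRatio', if_pos rfl, one_mul, neg_le_neg_iff]
    exact Real.logb_le_logb_of_le one_lt_two hi (le_ciSup (Set.finite_range p).bddAbove i)
  have ha : 1 < α.toReal := by
    simpa using (ENNReal.toReal_lt_toReal ENNReal.one_ne_top htop).mpr hα
  have hsum : p i ^ α.toReal ≤ ∑ x, p x ^ α.toReal :=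
    single_le_sum (fun x _ => Real.rpow_nonneg (hp x) _) (mem_univ i)
  have hlog : α.toReal * log2 (p i) ≤ log2 (∑ x, p x ^ α.toReal) := by
    rw [log2, ← Real.logb_rpow_eq_mul_logb_of_pos hi]
    exact Real.logb_le_logb_of_le one_lt_two (by positivity) hsum
  rw [renyi, if_neg h0, if_neg hα.ne', if_neg htop, aRatio', if_neg htop]
  calc (1 - α.toReal)⁻¹ * log2 (∑ x, p x ^ α.toReal)
      ≤ (1 - α.toReal)⁻¹ * (α.toReal * log2 (p i)) :=
        mul_le_mul_of_nonpos_left hlog (inv_nonpos.mpr (by linarith))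
    _ = α.toReal / (α.toReal - 1) * -log2 (p i) := by
        rw [div_eq_mul_inv, ← neg_sub 1, inv_neg]
        ring

lemma ConcaveOn.renyi_add_smul_ge {α : ℝ≥0∞}
    (hconc : ConcaveOn ℝ {x : X → ℝ | (∀ i, 0 ≤ x i) ∧ x ≠ 0} (scaledRenyi α))
    {p q : X → ℝ} (hp : IsProbVec p) (hq : IsProbVec q) {a b : ℝ} (ha : 0 ≤ a) (hb : 0 ≤ b)
    (hab : a + b = 1) : a * renyi α p + b * renyi α q ≤ renyi α (a • p + b • q) := by
  have h := hconc.2 ⟨hp.1, hp.ne_zero⟩ ⟨hq.1, hq.ne_zero⟩ ha hb hab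
  simpa only [scaledRenyi_of_isProbVec α hp, scaledRenyi_of_isProbVec α hq,
    scaledRenyi_of_isProbVec α (hp.add_smul hq ha hb hab), smul_eq_mul] using h

lemma log2_card_le_of_concaveOn_scaledRenyi [DecidableEq X] {α : ℝ≥0∞} (hα : 1 < α)
    (hconc : ConcaveOn ℝ {x : X → ℝ | (∀ i, 0 ≤ x i) ∧ x ≠ 0} (scaledRenyi α))
    {x₀ : X} {s : Finset X} (hx₀ : x₀ ∉ s) (hs : s.Nonempty) :
    log2 #s ≤ 2 * aRatio' α := by
  set mid := (1 / 2 : ℝ) • uniformOn {x₀} + (1 / 2 : ℝ) • uniformOn s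
  have hmid : IsProbVec mid :=
    (isProbVec_uniformOn (singleton_nonempty x₀)).add_smul (isProbVec_uniformOn hs)
      (by norm_num) (by norm_num) (by norm_num)
  have hmid_x₀ : mid x₀ = 1 / 2 := by
    simp [mid, uniformOn, hx₀]
  have hlower := hconc.renyi_add_smul_ge (isProbVec_uniformOn (singleton_nonempty x₀))
    (isProbVec_uniformOn hs) (a := 1 / 2) (b := 1 / 2) (by norm_num) (by norm_num) (by norm_num)
  have hupper := renyi_le_aRatio'_mul_neg_log2 hα hmid.1 (i := x₀) (by rw [hmid_x₀]; norm_num)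
  have hlog_one : log2 1 = 0 := Real.logb_one
  have hlog_half : -log2 (1 / 2) = 1 := by simp [log2, Real.logb_inv]
  rw [renyi_uniformOn _ (singleton_nonempty x₀), renyi_uniformOn _ hs, card_singleton,
    Nat.cast_one, hlog_one] at hlower
  rw [hmid_x₀, hlog_half] at hupper
  linarith

theorem exists_not_concaveOn_scaledRenyi {α : ℝ≥0∞} (hα : 1 < α) :
    ∃ d : ℕ, ¬ ConcaveOn ℝ {x : Fin d → ℝ | (∀ i, 0 ≤ x i) ∧ x ≠ 0} (scaledRenyi α) := by
  obtain ⟨k, hk⟩ := exists_nat_gt (2 * aRatio' α)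
  refine ⟨2 ^ k + 1, fun hconc => ?_⟩
  have hcard : #((univ : Finset (Fin (2 ^ k + 1))).erase 0) = 2 ^ k := by
    simp [card_erase_of_mem]
  have h := log2_card_le_of_concaveOn_scaledRenyi hα hconc (notMem_erase 0 univ)
    (card_pos.mp (by rw [hcard]; positivity))
  rw [hcard, log2] at h
  push_cast at h
  rw [Real.logb_pow, Real.logb_self_eq_one one_lt_two, mul_one] at h
  linarith

/-- For `α ∈ (1,∞]` the function `x ↦ ‖x‖₁ · H_α(x/‖x‖₁)` fails to be
concave in some dimension; consequently it is concave in every dimension only if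
`α ∈ [0,1]`. -/
theorem derivation_not_concave (α : ℝ≥0∞) (hα : 1 < α) :
    (∃ d : ℕ, ¬ ConcaveOn ℝ {x : Fin d → ℝ | (∀ i, 0 ≤ x i) ∧ x ≠ 0}
      (fun x => (∑ i, x i) * renyi α (fun i => x i / ∑ j, x j))) ∧
    (∀ β : ℝ≥0∞,
      (∀ d : ℕ, ConcaveOn ℝ {x : Fin d → ℝ | (∀ i, 0 ≤ x i) ∧ x ≠ 0}
        (fun x => (∑ i, x i) * renyi β (fun i => x i / ∑ j, x j))) → β ≤ 1) := by
  refine ⟨exists_not_concaveOn_scaledRenyi hα, fun β hβ => ?_⟩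
  by_contra! hβ1
  obtain ⟨d, hd⟩ := exists_not_concaveOn_scaledRenyi hβ1
  exact hd (hβ d)
end
end

section
/- Let μ be a finite positive Borel measure on [0,∞] such that ∫_{[0,1)} α/(1−α) dμ(α) < ∞ and ∫_{(1,∞]} α/(α−1) dμ(α) < ∞ (with the convention α/(α−1) = 1 at α = ∞). Suppose that for every d ∈ ℕ the function f_μ : (ℝ≥0)^d ∖ {0} → ℝ, f_μ(x) = ‖x‖₁ · exp₂( ∫_{[0,∞]} H_α(x/‖x‖₁) dμ(α) ), where ‖x‖₁ = ∑_i x_i, is concave. Then μ((1,∞]) = 0, μ({1}) = 0, and ∫_{[0,1)} α/(1−α) dμ(α) ≤ 1. -/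
/-!
Test concavity at the midpoint `w` of a point mass and the uniform distribution on `N` further
points. The endpoints have values `1` and `N ^ μ([0,∞])`, so concavity gives
`∫ H_α(w) dμ ≥ μ([0,∞]) log N - 1`. On the other hand `H_α(w) = log N - α/(1-α) + o(1)` for
`α < 1`, with the integrable majorant `1/(1-α)` for the error term, while for `α ≥ 1`
`H_α(w) ≤ H_1(w) = 1 + (log N)/2` (by AM-GM). Hence
`μ([1,∞]) (log N)/2 ≤ 1 + μ([1,∞]) - ∫_{[0,1)} α/(1-α) dμ + o(1)` as `N → ∞`, which forces
`μ([1,∞]) = 0` and then `∫_{[0,1)} α/(1-α) dμ ≤ 1`.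
-/

open MeasureTheory
open scoped ENNReal

noncomputable section

open Finset Filter Topology

lemma log2_inv (x : ℝ) : log2 x⁻¹ = -log2 x := Real.logb_inv 2 x

lemma log2_two : log2 2 = 1 := Real.logb_self_eq_one one_lt_two

lemma log2_two_mul {x : ℝ} (hx : 0 < x) : log2 (2 * x) = 1 + log2 x := by
  rw [log2, Real.logb_mul two_ne_zero hx.ne', ← log2, ← log2, log2_two]

lemma ENNReal.toReal_lt_one {α : ℝ≥0∞} (hα : α < 1) : α.toReal < 1 :=
  ENNReal.toReal_lt_of_lt_ofReal (by simpa using hα)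

lemma exp2_le_exp2 {x y : ℝ} : exp2 x ≤ exp2 y ↔ x ≤ y :=
  Real.rpow_le_rpow_left_iff one_lt_two

section Renyi

variable {X : Type*} [Fintype X]

lemma measurable_renyi (p : X → ℝ) : Measurable fun α : ℝ≥0∞ => renyi α p := by
  unfold renyi log2 Real.logb
  refine Measurable.ite (measurableSet_singleton 0) measurable_const <|
    Measurable.ite (measurableSet_singleton 1) measurable_const <|
    Measurable.ite (measurableSet_singleton ⊤) measurable_const ?_
  fun_prop

lemma renyi_of_pos {p : X → ℝ} (hp : ∀ x, 0 < p x) {α : ℝ≥0∞} (h1 : α ≠ 1)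
    (htop : α ≠ ⊤) :
    renyi α p = (1 - α.toReal)⁻¹ * log2 (∑ x, p x ^ α.toReal) := by
  rcases eq_or_ne α 0 with rfl | h0
  · simp [renyi, Fintype.card_congr (Equiv.subtypeUnivEquiv hp)]
  · simp [renyi, h0, h1, htop]

variable [DecidableEq X]

def unifOn (s : Finset X) : X → ℝ := fun x => if x ∈ s then (#s : ℝ)⁻¹ else 0

lemma sum_comp_unifOn (s : Finset X) {g : ℝ → ℝ} (hg : g 0 = 0) :
    ∑ x, g (unifOn s x) = #s * g (#s)⁻¹ := by
  simp [unifOn, apply_ite g, hg]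

lemma isProbVec_unifOn {s : Finset X} (hs : s.Nonempty) : IsProbVec (unifOn s) := by
  refine ⟨fun x => by unfold unifOn; split_ifs <;> positivity, ?_⟩
  rw [sum_comp_unifOn s (g := fun t => t) rfl,
    mul_inv_cancel₀ (by exact_mod_cast hs.card_pos.ne')]

lemma renyi_unifOn {s : Finset X} (hs : s.Nonempty) (α : ℝ≥0∞) :
    renyi α (unifOn s) = log2 #s := by
  have hn : (0 : ℝ) < #s := by exact_mod_cast hs.card_pos
  rcases eq_or_ne α 0 with rfl | h0
  · have hpos : ∀ x, 0 < unifOn s x ↔ x ∈ s := fun x => by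
      unfold unifOn; split_ifs <;> simp [*]
    simp [renyi, Fintype.card_congr (Equiv.subtypeEquivRight hpos)]
  rcases eq_or_ne α 1 with rfl | h1
  · rw [renyi, if_neg h0, if_pos rfl, sum_comp_unifOn s (g := fun t => t * log2 t) (by simp),
      log2_inv]
    field_simp
  rcases eq_or_ne α ⊤ with rfl | htop
  · obtain ⟨x, hx⟩ := hs
    have : Nonempty X := ⟨x⟩
    have hsup : ⨆ y, unifOn s y = (#s : ℝ)⁻¹ := by
      refine le_antisymm (ciSup_le fun y => ?_) ?_
      · unfold unifOn; split_ifs <;> simp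
      · exact (if_pos hx).symm.le.trans (le_ciSup (Finite.bddAbove_range (unifOn s)) x)
    simp [renyi, hsup, log2_inv]
  set a := α.toReal
  have ha : 0 < a := ENNReal.toReal_pos h0 htop
  have ha1 : 1 - a ≠ 0 := sub_ne_zero.2 (Ne.symm <| by simpa [a, ENNReal.toReal_eq_one_iff])
  have hsum : (#s : ℝ) * (#s : ℝ)⁻¹ ^ a = (#s : ℝ) ^ (1 - a) := by
    rw [Real.inv_rpow hn.le, Real.rpow_sub hn, Real.rpow_one, div_eq_mul_inv]
  rw [renyi, if_neg h0, if_neg h1, if_neg htop,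
    sum_comp_unifOn s (g := fun t => t ^ a) (Real.zero_rpow ha.ne'), hsum, log2,
    Real.logb_rpow_eq_mul_logb_of_pos hn, ← mul_assoc, inv_mul_cancel₀ ha1, one_mul, log2]

end Renyi

def spikeMix (N : ℕ) : Fin (N + 1) → ℝ :=
  (1 / 2 : ℝ) • unifOn {0} + (1 / 2 : ℝ) • unifOn {0}ᶜ

lemma spikeMix_apply (N : ℕ) (i : Fin (N + 1)) :
    spikeMix N i = if i = 0 then 2⁻¹ else (2 * N : ℝ)⁻¹ := by
  have hcard : #({0}ᶜ : Finset (Fin (N + 1))) = N := by simp [Finset.card_compl]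
  by_cases hi : i = 0 <;> simp [spikeMix, unifOn, hi, hcard, mul_comm]

lemma spikeMix_pos {N : ℕ} (hN : 1 ≤ N) (i : Fin (N + 1)) : 0 < spikeMix N i := by
  rw [spikeMix_apply]; split_ifs <;> positivity

lemma sum_comp_spikeMix (N : ℕ) (g : ℝ → ℝ) :
    ∑ i, g (spikeMix N i) = g 2⁻¹ + N * g (2 * N : ℝ)⁻¹ := by
  simp [Fin.sum_univ_succ, spikeMix_apply, Fin.succ_ne_zero]

lemma renyi_one_spikeMix {N : ℕ} (hN : 1 ≤ N) : renyi 1 (spikeMix N) = 1 + log2 N / 2 := by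
  have hN0 : (0 : ℝ) < N := by exact_mod_cast hN
  rw [renyi, if_neg one_ne_zero, if_pos rfl, sum_comp_spikeMix N (fun t => t * log2 t),
    log2_inv, log2_inv, log2_two_mul hN0, log2_two]
  field_simp
  ring

lemma renyi_top_spikeMix {N : ℕ} (hN : 1 ≤ N) : renyi ⊤ (spikeMix N) = 1 := by
  have hsup : ⨆ i, spikeMix N i = 2⁻¹ := by
    refine le_antisymm (ciSup_le fun i => ?_) ?_
    · rw [spikeMix_apply]
      split_ifs
      · rfl
      · rw [mul_inv]
        exact mul_le_of_le_one_right (by norm_num) (inv_le_one_of_one_le₀ (by exact_mod_cast hN))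
    · exact (spikeMix_apply N 0).symm.le.trans (le_ciSup (Finite.bddAbove_range _) 0)
  simp [renyi, hsup, log2]

lemma renyi_spikeMix {N : ℕ} (hN : 1 ≤ N) {α : ℝ≥0∞} (h1 : α ≠ 1)
    (htop : α ≠ ⊤) :
    renyi α (spikeMix N) =
      (1 - α.toReal)⁻¹ * (-α.toReal + log2 (1 + (N : ℝ) ^ (1 - α.toReal))) := by
  have hN0 : (0 : ℝ) < N := by exact_mod_cast hN
  set a := α.toReal
  have hsum : ∑ i, spikeMix N i ^ a = (2 : ℝ) ^ (-a) * (1 + (N : ℝ) ^ (1 - a)) := by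
    rw [sum_comp_spikeMix N (fun t => t ^ a), mul_inv,
      Real.mul_rpow (by positivity) (by positivity), Real.inv_rpow hN0.le,
      Real.inv_rpow zero_le_two, ← Real.rpow_neg zero_le_two, Real.rpow_sub hN0, Real.rpow_one]
    field_simp
  rw [renyi_of_pos (spikeMix_pos hN) h1 htop, hsum, log2,
    Real.logb_mul (by positivity) (by positivity),
    Real.logb_rpow two_pos (by norm_num), log2]

lemma one_add_half_mul_log2_le_log2_one_add_rpow {x : ℝ} (hx : 0 < x) (t : ℝ) :
    1 + t / 2 * log2 x ≤ log2 (1 + x ^ t) := by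
  have hsq : (x ^ (t / 2)) ^ 2 = x ^ t := by
    rw [← Real.rpow_natCast, ← Real.rpow_mul hx.le]; norm_num
  have amgm : 2 * x ^ (t / 2) ≤ 1 + x ^ t := by nlinarith [sq_nonneg (x ^ (t / 2) - 1)]
  calc 1 + t / 2 * log2 x = log2 (2 * x ^ (t / 2)) := by
        rw [log2_two_mul (by positivity), log2, log2, Real.logb_rpow_eq_mul_logb_of_pos hx]
    _ ≤ log2 (1 + x ^ t) := Real.logb_le_logb_of_le one_lt_two (by positivity) amgm

def spikeExcess (N : ℕ) (α : ℝ≥0∞) : ℝ :=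
  (1 - α.toReal)⁻¹ * log2 (1 + (N : ℝ) ^ (α.toReal - 1))

lemma renyi_spikeMix_of_lt_one {N : ℕ} (hN : 1 ≤ N) {α : ℝ≥0∞} (hα : α < 1) :
    renyi α (spikeMix N) = log2 N - aRatio α + spikeExcess N α := by
  have hN0 : (0 : ℝ) < N := by exact_mod_cast hN
  have htop : α ≠ ⊤ := (hα.trans ENNReal.one_lt_top).ne
  have ha : α.toReal < 1 := ENNReal.toReal_lt_one hα
  have hfactor : 1 + (N : ℝ) ^ (1 - α.toReal) =
      (N : ℝ) ^ (1 - α.toReal) * (1 + (N : ℝ) ^ (α.toReal - 1)) := by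
    rw [mul_add, mul_one, ← Real.rpow_add hN0]; norm_num [add_comm]
  rw [renyi_spikeMix hN hα.ne htop, hfactor, log2, Real.logb_mul (by positivity) (by positivity),
    Real.logb_rpow_eq_mul_logb_of_pos hN0, aRatio, if_neg htop, spikeExcess, log2, log2]
  field_simp [(sub_pos.2 ha).ne']
  ring

lemma renyi_spikeMix_mem_Icc_of_one_le {N : ℕ} (hN : 1 ≤ N) {α : ℝ≥0∞} (hα : 1 ≤ α) :
    renyi α (spikeMix N) ∈ Set.Icc 0 (1 + log2 N / 2) := by
  have hN1 : (1 : ℝ) ≤ N := by exact_mod_cast hN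
  have hL : 0 ≤ log2 N := Real.logb_nonneg one_lt_two hN1
  rcases hα.eq_or_lt with rfl | hα
  · rw [renyi_one_spikeMix hN]; constructor <;> linarith
  rcases eq_or_ne α ⊤ with rfl | htop
  · rw [renyi_top_spikeMix hN]; constructor <;> linarith
  have ha : 1 < α.toReal := by simpa using (ENNReal.toReal_lt_toReal ENNReal.one_ne_top htop).2 hα
  set a := α.toReal
  set z := log2 (1 + (N : ℝ) ^ (1 - a))
  have hz : z ≤ 1 := by
    have : (N : ℝ) ^ (1 - a) ≤ 1 := Real.rpow_le_one_of_one_le_of_nonpos hN1 (by linarith)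
    calc z ≤ log2 2 := Real.logb_le_logb_of_le one_lt_two (by positivity) (by linarith)
      _ = 1 := log2_two
  have hz' : 1 + (1 - a) / 2 * log2 N ≤ z :=
    one_add_half_mul_log2_le_log2_one_add_rpow (by linarith) (1 - a)
  rw [renyi_spikeMix hN hα.ne' htop, inv_mul_eq_div, Set.mem_Icc,
    div_nonneg_iff, div_le_iff_of_neg (by linarith)]
  constructor
  · right; constructor <;> linarith
  · nlinarith

lemma measurable_spikeExcess (N : ℕ) : Measurable (spikeExcess N) := by
  unfold spikeExcess log2 Real.logb
  fun_prop

lemma one_add_aRatio {α : ℝ≥0∞} (hα : α < 1) : 1 + aRatio α = (1 - α.toReal)⁻¹ := by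
  have ha : α.toReal < 1 := ENNReal.toReal_lt_one hα
  rw [aRatio, if_neg (hα.trans ENNReal.one_lt_top).ne]
  field_simp [(sub_pos.2 ha).ne']
  ring

lemma spikeExcess_mem_Icc {N : ℕ} (hN : 1 ≤ N) {α : ℝ≥0∞} (hα : α < 1) :
    spikeExcess N α ∈ Set.Icc 0 (1 + aRatio α) := by
  have ha : α.toReal < 1 := ENNReal.toReal_lt_one hα
  have hpow : (N : ℝ) ^ (α.toReal - 1) ≤ 1 :=
    Real.rpow_le_one_of_one_le_of_nonpos (by exact_mod_cast hN) (by linarith)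
  have hlog : log2 (1 + (N : ℝ) ^ (α.toReal - 1)) ≤ 1 :=
    calc _ ≤ log2 2 := Real.logb_le_logb_of_le one_lt_two (by positivity) (by linarith)
      _ = 1 := log2_two
  have hinv : 0 ≤ (1 - α.toReal)⁻¹ := inv_nonneg.2 (by linarith)
  rw [one_add_aRatio hα, spikeExcess]
  exact ⟨mul_nonneg hinv (Real.logb_nonneg one_lt_two (le_add_of_nonneg_right (by positivity))),
    mul_le_of_le_one_right hinv hlog⟩

lemma tendsto_spikeExcess {α : ℝ≥0∞} (hα : α < 1) :
    Tendsto (fun N : ℕ => spikeExcess N α) atTop (𝓝 0) := by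
  have ha : α.toReal < 1 := ENNReal.toReal_lt_one hα
  have hpow : Tendsto (fun N : ℕ => (N : ℝ) ^ (α.toReal - 1)) atTop (𝓝 0) := by
    simpa [Function.comp_def] using
      (tendsto_rpow_neg_atTop (sub_pos.2 ha)).comp tendsto_natCast_atTop_atTop
  have hlog := ((tendsto_const_nhds (x := (1 : ℝ))).add hpow).log (by norm_num)
  simpa [spikeExcess, log2, Real.logb] using
    (hlog.div_const (Real.log 2)).const_mul (1 - α.toReal)⁻¹

lemma tendsto_setIntegral_spikeExcess {μ : Measure ℝ≥0∞} [IsFiniteMeasure μ]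
    (h1 : IntegrableOn aRatio (Set.Iio 1) μ) :
    Tendsto (fun N : ℕ => ∫ α in Set.Iio 1, spikeExcess N α ∂μ) atTop (𝓝 0) := by
  have hlim := tendsto_integral_filter_of_dominated_convergence (μ := μ.restrict (Set.Iio 1))
    (F := fun (N : ℕ) α => spikeExcess N α) (f := fun _ => 0) (fun α => 1 + aRatio α)
    (Eventually.of_forall fun N => (measurable_spikeExcess N).aestronglyMeasurable)
    ((eventually_ge_atTop 1).mono fun N hN => (ae_restrict_iff' measurableSet_Iio).2 <|
      ae_of_all _ fun α hα => by
        obtain ⟨h0, hle⟩ := spikeExcess_mem_Icc hN hα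
        rwa [Real.norm_of_nonneg h0])
    ((integrable_const 1).add h1)
    ((ae_restrict_iff' measurableSet_Iio).2 <| ae_of_all _ fun α hα => tendsto_spikeExcess hα)
  simpa using hlim

lemma IsProbVec.half_add {X : Type*} [Fintype X] {p q : X → ℝ} (hp : IsProbVec p)
    (hq : IsProbVec q) : IsProbVec ((1 / 2 : ℝ) • p + (1 / 2 : ℝ) • q) := by
  refine ⟨fun x => ?_, ?_⟩
  · simp only [Pi.add_apply, Pi.smul_apply, smul_eq_mul]
    nlinarith [hp.1 x, hq.1 x]
  · simp only [Pi.add_apply, Pi.smul_apply, smul_eq_mul, Finset.sum_add_distrib,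
      ← Finset.mul_sum, hp.2, hq.2]
    norm_num

lemma exp2_integral_renyi_midpoint_ge {X : Type*} [Fintype X] {μ : Measure ℝ≥0∞}
    (hconc : ConcaveOn ℝ {x : X → ℝ | (∀ i, 0 ≤ x i) ∧ x ≠ 0}
      (fun x => (∑ i, x i) * exp2 (∫ α, renyi α (fun i => x i / ∑ j, x j) ∂μ)))
    {p q : X → ℝ} (hp : IsProbVec p) (hq : IsProbVec q) :
    (exp2 (∫ α, renyi α p ∂μ) + exp2 (∫ α, renyi α q ∂μ)) / 2 ≤
      exp2 (∫ α, renyi α ((1 / 2 : ℝ) • p + (1 / 2 : ℝ) • q) ∂μ) := by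
  have mem : ∀ {r : X → ℝ}, IsProbVec r →
      r ∈ {x : X → ℝ | (∀ i, 0 ≤ x i) ∧ x ≠ 0} :=
    fun hr => ⟨hr.1, fun h => by simpa [h] using hr.2⟩
  have value : ∀ {r : X → ℝ}, IsProbVec r →
      (∑ i, r i) * exp2 (∫ α, renyi α (fun i => r i / ∑ j, r j) ∂μ) =
        exp2 (∫ α, renyi α r ∂μ) :=
    fun hr => by simp only [hr.2, div_one, one_mul]
  have h := hconc.2 (mem hp) (mem hq) (by norm_num : (0 : ℝ) ≤ 1 / 2)
    (by norm_num : (0 : ℝ) ≤ 1 / 2) (by norm_num)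
  simp only [smul_eq_mul, value hp, value hq, value (hp.half_add hq)] at h
  linarith

lemma integral_renyi_spikeMix_ge {μ : Measure ℝ≥0∞} {N : ℕ} (hN : 1 ≤ N)
    (hconc : ConcaveOn ℝ {x : Fin (N + 1) → ℝ | (∀ i, 0 ≤ x i) ∧ x ≠ 0}
      (fun x => (∑ i, x i) * exp2 (∫ α, renyi α (fun i => x i / ∑ j, x j) ∂μ))) :
    μ.real Set.univ * log2 N - 1 ≤ ∫ α, renyi α (spikeMix N) ∂μ := by
  have hrest : ({0}ᶜ : Finset (Fin (N + 1))).Nonempty :=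
    ⟨Fin.last N, by simpa [Fin.ext_iff] using Nat.one_le_iff_ne_zero.1 hN⟩
  have hcard : #({0}ᶜ : Finset (Fin (N + 1))) = N := by simp [Finset.card_compl]
  have h := exp2_integral_renyi_midpoint_ge hconc (isProbVec_unifOn (singleton_nonempty 0))
    (isProbVec_unifOn hrest)
  simp only [renyi_unifOn (singleton_nonempty _), renyi_unifOn hrest, hcard, integral_const,
    card_singleton, Nat.cast_one, smul_eq_mul] at h
  have hhalf : exp2 (μ.real Set.univ * log2 N - 1) = exp2 (μ.real Set.univ * log2 N) / 2 := by
    rw [exp2, exp2, Real.rpow_sub two_pos, Real.rpow_one]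
  rw [← exp2_le_exp2, hhalf]
  refine le_trans ?_ h
  simp only [log2, Real.logb_one, mul_zero, exp2, Real.rpow_zero]
  linarith

lemma integral_renyi_spikeMix_le {μ : Measure ℝ≥0∞} [IsFiniteMeasure μ]
    (h1 : IntegrableOn aRatio (Set.Iio 1) μ) {N : ℕ} (hN : 1 ≤ N) :
    ∫ α, renyi α (spikeMix N) ∂μ ≤
      μ.real (Set.Iio 1) * log2 N - ∫ α in Set.Iio 1, aRatio α ∂μ +
        ∫ α in Set.Iio 1, spikeExcess N α ∂μ + μ.real (Set.Ici 1) * (1 + log2 N / 2) := by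
  have hexcess : IntegrableOn (spikeExcess N) (Set.Iio 1) μ :=
    ((integrable_const 1).add h1).mono' (measurable_spikeExcess N).aestronglyMeasurable <|
      (ae_restrict_iff' measurableSet_Iio).2 <| ae_of_all _ fun α hα => by
        obtain ⟨h0, hle⟩ := spikeExcess_mem_Icc hN hα
        rwa [Real.norm_of_nonneg h0]
  have hlow : Set.EqOn (fun α => renyi α (spikeMix N))
      (fun α => log2 N - aRatio α + spikeExcess N α) (Set.Iio 1) :=
    fun α hα => renyi_spikeMix_of_lt_one hN hα
  have hmain : IntegrableOn (fun α => log2 N - aRatio α) (Set.Iio 1) μ :=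
    (integrable_const _).sub h1
  have hint_low : IntegrableOn (fun α => renyi α (spikeMix N)) (Set.Iio 1) μ :=
    IntegrableOn.congr_fun (hmain.add hexcess) hlow.symm measurableSet_Iio
  have hint_high : IntegrableOn (fun α => renyi α (spikeMix N)) (Set.Ici 1) μ :=
    IntegrableOn.of_bound (measure_lt_top _ _)
      (measurable_renyi _).aestronglyMeasurable (1 + log2 N / 2) <|
      (ae_restrict_iff' measurableSet_Ici).2 <| ae_of_all _ fun α hα => by
        obtain ⟨h0, hle⟩ := renyi_spikeMix_mem_Icc_of_one_le hN hα
        rwa [Real.norm_of_nonneg h0]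
  have hint : Integrable (fun α => renyi α (spikeMix N)) μ := by
    simpa [Set.Iio_union_Ici] using hint_low.union hint_high
  have heq_low : ∫ α in Set.Iio 1, renyi α (spikeMix N) ∂μ =
      μ.real (Set.Iio 1) * log2 N - ∫ α in Set.Iio 1, aRatio α ∂μ +
        ∫ α in Set.Iio 1, spikeExcess N α ∂μ := by
    rw [setIntegral_congr_fun measurableSet_Iio hlow, integral_add hmain hexcess,
      integral_sub (integrable_const _) h1, setIntegral_const, smul_eq_mul]
  have hle_high : ∫ α in Set.Ici 1, renyi α (spikeMix N) ∂μ ≤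
      μ.real (Set.Ici 1) * (1 + log2 N / 2) := by
    rw [← smul_eq_mul, ← setIntegral_const]
    exact setIntegral_mono_on hint_high (integrable_const _) measurableSet_Ici
      fun α hα => (renyi_spikeMix_mem_Icc_of_one_le hN hα).2
  rw [← integral_add_compl measurableSet_Iio hint, Set.compl_Iio, heq_low]
  linarith

lemma nonpos_of_eventually_mul_le {q C : ℝ} {L : ℕ → ℝ} (hL : Tendsto L atTop atTop)
    (h : ∀ᶠ N in atTop, q * L N ≤ C) : q ≤ 0 := by
  by_contra! hq
  obtain ⟨N, hle, hgt⟩ := (h.and ((hL.const_mul_atTop hq).eventually_gt_atTop C)).exists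
  exact hle.not_gt hgt

theorem necessary_conditions_concave_general (μ : Measure ℝ≥0∞) (hfin : IsFiniteMeasure μ)
    (h1 : IntegrableOn aRatio (Set.Iio 1) μ)
    (hconc : ∀ d : ℕ, ConcaveOn ℝ {x : Fin d → ℝ | (∀ i, 0 ≤ x i) ∧ x ≠ 0}
      (fun x => (∑ i, x i) * exp2 (∫ α, renyi α (fun i => x i / ∑ j, x j) ∂μ))) :
    μ (Set.Ioi 1) = 0 ∧ μ {1} = 0 ∧ ∫ α in Set.Iio (1 : ℝ≥0∞), aRatio α ∂μ ≤ 1 := by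
  set A := ∫ α in Set.Iio (1 : ℝ≥0∞), aRatio α ∂μ
  set q := μ.real (Set.Ici 1)
  have hE := tendsto_setIntegral_spikeExcess h1
  have key : ∀ N : ℕ, 1 ≤ N →
      q * (log2 N / 2) ≤ 1 + q - A + ∫ α in Set.Iio 1, spikeExcess N α ∂μ := by
    intro N hN
    have h := (integral_renyi_spikeMix_ge hN (hconc (N + 1))).trans
      (integral_renyi_spikeMix_le h1 hN)
    rw [← measureReal_add_measureReal_compl (measurableSet_Iio (a := 1)), Set.compl_Iio] at h
    linarith
  have hq : q = 0 := by
    refine le_antisymm (nonpos_of_eventually_mul_le (C := 2 + q - A)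
      (L := fun N : ℕ => log2 N / 2) ?_ ?_) measureReal_nonneg
    · exact ((Real.tendsto_logb_atTop one_lt_two).comp tendsto_natCast_atTop_atTop).atTop_div_const
        two_pos
    · filter_upwards [eventually_ge_atTop 1, hE.eventually (ge_mem_nhds one_pos)] with N hN hE1
      linarith [key N hN]
  have hIci : μ (Set.Ici 1) = 0 := (measureReal_eq_zero_iff).1 hq
  refine ⟨measure_mono_null Set.Ioi_subset_Ici_self hIci, measure_mono_null (by simp) hIci, ?_⟩
  have hA : A - 1 ≤ 0 := ge_of_tendsto hE <| (eventually_ge_atTop 1).mono fun N hN => by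
    linarith [key N hN, show q * (log2 N / 2) = 0 by rw [hq, zero_mul]]
  linarith

/-- Necessary conditions for concavity (positive-measure case): if
`x ↦ ‖x‖₁ · 2^(∫ H_α(x/‖x‖₁) dμ(α))` is concave on `(ℝ≥0)^d ∖ {0}` for every `d`, then
`μ((1,∞]) = 0`, `μ({1}) = 0` and `∫_{[0,1)} α/(1-α) dμ(α) ≤ 1`. -/
theorem necessary_conditions_concave (μ : Measure ℝ≥0∞) (hfin : IsFiniteMeasure μ)
    (h1 : IntegrableOn aRatio (Set.Iio 1) μ)
    (h2 : IntegrableOn aRatio' (Set.Ioi 1) μ)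
    (hconc : ∀ d : ℕ, ConcaveOn ℝ {x : Fin d → ℝ | (∀ i, 0 ≤ x i) ∧ x ≠ 0}
      (fun x => (∑ i, x i) * exp2 (∫ α, renyi α (fun i => x i / ∑ j, x j) ∂μ))) :
    μ (Set.Ioi 1) = 0 ∧ μ {1} = 0 ∧ ∫ α in Set.Iio (1 : ℝ≥0∞), aRatio α ∂μ ≤ 1 :=
  necessary_conditions_concave_general μ hfin h1 hconc
end
end
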